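/- Let Z ⊂ ℝ^{d₁} and Y ⊂ ℝ^{d₂} be compact sets. Let σ', σ be Borel probability measures on Z, let ρ', ρ be Borel probability measures on Y, and let γ̄ ∈ Π(σ', σ), γ ∈ Π(ρ', ρ), λ ∈ Π(σ, ρ). Let (γ̄_{z'})_{z'∈Z} be the disintegration of γ̄ with respect to its second marginal σ and (γ_{y'})_{y'∈Y} the disintegration of γ with respect to its second marginal ρ, and define the measure λ' on Z×Y by ∫ φ dλ' := ∫_{Z×Y} ∫_Z ∫_Y φ(z,y) dγ̄_{z'}(z) dγ_{y'}(y) dλ(z',y') for bounded measurable φ. Then: (a) λ' ∈ Π(σ', ρ'); (b) KL(λ' | σ'⊗ρ') ≤ KL(λ | σ⊗ρ); and (c) W_{Z×Y}(λ', λ) ≤ ∫_{Z×Z} ‖z−z'‖ dγ̄(z,z') + ∫_{Y×Y} ‖y−y'‖ dγ(y,y'), where Z×Y carries the Euclidean distance. -/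

import Mathlib

/-!
The glued measure `λ'` is the image of `λ` under the Markov kernel `κZ ∥ₖ κY`, which also maps
`σ ⊗ ρ` to `σ' ⊗ ρ'`; so (a) is a marginal computation and (b) is the data processing inequality
for the Kullback–Leibler divergence. For (c), `(λ ⊗ₘ (κZ ∥ₖ κY)).map swap` couples `λ'` with `λ`,
and since the Euclidean distance on `Z × Y` is at most the sum of the distances in the factors,
its cost splits into the displacement costs of `γ̄` and `γ`.
-/

open MeasureTheory Set Filter
open scoped ENNReal Classical

noncomputable section

abbrev E (d : ℕ) : Type := EuclideanSpace ℝ (Fin d)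

/-- Optimal-transport cost with cost function `c`. -/
noncomputable def OTC {A B : Type*} [MeasurableSpace A] [MeasurableSpace B]
    (c : A → B → ℝ≥0∞) (α : Measure A) (β : Measure B) : ℝ≥0∞ :=
  ⨅ (γ : Measure (A × B)) (_ : γ.map Prod.fst = α) (_ : γ.map Prod.snd = β),
    ∫⁻ p, c p.1 p.2 ∂γ

/-- Euclidean distance on `ℝ^{d₁} × ℝ^{d₂} = ℝ^{d₁+d₂}`. -/
noncomputable def edistE2 {d₁ d₂ : ℕ} (p q : E d₁ × E d₂) : ℝ≥0∞ :=
  ENNReal.ofReal (Real.sqrt (dist p.1 q.1 ^ 2 + dist p.2 q.2 ^ 2))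

/-- Kullback–Leibler divergence via `φ(s) = s log s − s + 1`. -/
def KLphi (s : ℝ) : ℝ := s * Real.log s - s + 1

noncomputable def KL {A : Type*} [MeasurableSpace A] (α β : Measure A) : ℝ≥0∞ :=
  if α ≪ β then ∫⁻ x, ENNReal.ofReal (KLphi ((α.rnDeriv β x).toReal)) ∂β else ⊤

/-- Product of two measures. -/
noncomputable def prodM {A B : Type*} [MeasurableSpace A] [MeasurableSpace B]
    (α : Measure A) (β : Measure B) : Measure (A × B) :=
  α.bind fun a => β.map (Prod.mk a)

open ProbabilityTheory InformationTheory

lemma KLphi_eq_klFun : KLphi = klFun := by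
  funext s
  rw [KLphi, klFun_apply]
  ring

lemma KL_eq_klDiv {A : Type*} [MeasurableSpace A] (μ ν : Measure A)
    [IsFiniteMeasure μ] [IsFiniteMeasure ν] : KL μ ν = klDiv μ ν := by
  rw [KL, klDiv_eq_lintegral_klFun, KLphi_eq_klFun]

lemma KL_comp_right_le {A B : Type*} [MeasurableSpace A] [MeasurableSpace B] (μ ν : Measure A)
    [IsFiniteMeasure μ] [IsFiniteMeasure ν] (κ : Kernel A B) [IsMarkovKernel κ] :
    KL (κ ∘ₘ μ) (κ ∘ₘ ν) ≤ KL μ ν := by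
  rw [KL_eq_klDiv, KL_eq_klDiv]
  exact klDiv_comp_right_le μ ν κ

lemma prodM_eq_prod {A B : Type*} [MeasurableSpace A] [MeasurableSpace B]
    (α : Measure A) (β : Measure B) : prodM α β = α.prod β :=
  (Measure.prod_def α β).symm

section ParallelComp

variable {α β γ δ : Type*} [MeasurableSpace α] [MeasurableSpace β] [MeasurableSpace γ]
  [MeasurableSpace δ] (κ : Kernel α β) (η : Kernel γ δ)

lemma bind_prodM_eq_parallelComp_comp [IsSFiniteKernel κ] [IsSFiniteKernel η]
    (l : Measure (α × γ)) : (l.bind fun p => prodM (κ p.1) (η p.2)) = (κ ∥ₖ η) ∘ₘ l := by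
  congr
  funext p
  rw [Kernel.parallelComp_apply, prodM_eq_prod]

lemma map_fst_parallelComp_comp [IsSFiniteKernel κ] [IsMarkovKernel η] (l : Measure (α × γ)) :
    ((κ ∥ₖ η) ∘ₘ l).map Prod.fst = κ ∘ₘ l.map Prod.fst := by
  rw [Measure.map_comp _ _ measurable_fst, ← Measure.deterministic_comp_eq_map measurable_fst,
    Measure.comp_assoc, Kernel.comp_deterministic_eq_comap]
  congr
  ext p : 1
  rw [Kernel.map_apply _ measurable_fst, Kernel.parallelComp_apply, Kernel.comap_apply]
  exact Measure.fst_prod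

lemma map_snd_parallelComp_comp [IsMarkovKernel κ] [IsSFiniteKernel η] (l : Measure (α × γ)) :
    ((κ ∥ₖ η) ∘ₘ l).map Prod.snd = η ∘ₘ l.map Prod.snd := by
  rw [Measure.map_comp _ _ measurable_snd, ← Measure.deterministic_comp_eq_map measurable_snd,
    Measure.comp_assoc, Kernel.comp_deterministic_eq_comap]
  congr
  ext p : 1
  rw [Kernel.map_apply _ measurable_snd, Kernel.parallelComp_apply, Kernel.comap_apply]
  exact Measure.snd_prod

lemma parallelComp_comp_prod [IsSFiniteKernel κ] [IsSFiniteKernel η]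
    (μ : Measure α) [SFinite μ] (ν : Measure γ) [SFinite ν] :
    (κ ∥ₖ η) ∘ₘ μ.prod ν = (κ ∘ₘ μ).prod (η ∘ₘ ν) := by
  rw [Measure.prod_comp_left, Measure.prod_comp_right, Measure.comp_assoc,
    Kernel.parallelComp_comp_parallelComp, Kernel.comp_id, Kernel.id_comp]

end ParallelComp

section Transport

variable {α β : Type*} [MeasurableSpace α] [MeasurableSpace β]

lemma lintegral_map_swap_compProd (μ : Measure α) [SFinite μ] (κ : Kernel α β)
    [IsSFiniteKernel κ] {c : β → α → ℝ≥0∞} (hc : Measurable (Function.uncurry c)) :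
    ∫⁻ p, c p.1 p.2 ∂(μ ⊗ₘ κ).map Prod.swap = ∫⁻ x, ∫⁻ y, c y x ∂κ x ∂μ := by
  rw [lintegral_map (f := fun q : β × α => c q.1 q.2) hc measurable_swap]
  exact Measure.lintegral_compProd (hc.comp measurable_swap)

lemma OTC_comp_le (μ : Measure α) [SFinite μ] (κ : Kernel α β) [IsMarkovKernel κ]
    {c : β → α → ℝ≥0∞} (hc : Measurable (Function.uncurry c)) :
    OTC c (κ ∘ₘ μ) μ ≤ ∫⁻ x, ∫⁻ y, c y x ∂κ x ∂μ := by
  rw [← lintegral_map_swap_compProd μ κ hc]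
  exact iInf₂_le_of_le _ ((Measure.fst_map_swap).trans (Measure.snd_compProd μ κ))
    (iInf_le_of_le ((Measure.snd_map_swap).trans (Measure.fst_compProd μ κ)) le_rfl)

lemma lintegral_add_comp_fst_snd (l : Measure (α × β)) {u : α → ℝ≥0∞} (hu : Measurable u)
    {v : β → ℝ≥0∞} (hv : Measurable v) :
    ∫⁻ p, u p.1 + v p.2 ∂l = ∫⁻ x, u x ∂l.map Prod.fst + ∫⁻ y, v y ∂l.map Prod.snd := by
  rw [lintegral_add_left (f := fun p : α × β => u p.1) (hu.comp measurable_fst),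
    lintegral_map hu measurable_fst, lintegral_map hv measurable_snd]

end Transport

lemma edistE2_le {d₁ d₂ : ℕ} (p q : E d₁ × E d₂) :
    edistE2 p q ≤ edist p.1 q.1 + edist p.2 q.2 := by
  rw [edistE2, edist_dist, edist_dist, ← ENNReal.ofReal_add dist_nonneg dist_nonneg]
  refine ENNReal.ofReal_le_ofReal (Real.sqrt_le_iff.mpr ⟨by positivity, ?_⟩)
  nlinarith [dist_nonneg (x := p.1) (y := q.1), dist_nonneg (x := p.2) (y := q.2)]

lemma measurable_edistE2 {d₁ d₂ : ℕ} : Measurable (Function.uncurry (@edistE2 d₁ d₂)) := by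
  unfold edistE2
  fun_prop

lemma lintegral_edistE2_parallelComp_le {d₁ d₂ : ℕ} (κ : Kernel (E d₁) (E d₁)) [IsMarkovKernel κ]
    (η : Kernel (E d₂) (E d₂)) [IsMarkovKernel η] (p : E d₁ × E d₂) :
    ∫⁻ w, edistE2 w p ∂(κ ∥ₖ η) p ≤ ∫⁻ z, edist z p.1 ∂κ p.1 + ∫⁻ y, edist y p.2 ∂η p.2 := by
  calc ∫⁻ w, edistE2 w p ∂(κ ∥ₖ η) p
      ≤ ∫⁻ w, edist w.1 p.1 + edist w.2 p.2 ∂(κ ∥ₖ η) p := lintegral_mono fun w => edistE2_le w p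
    _ = ∫⁻ z, edist z p.1 ∂κ p.1 + ∫⁻ y, edist y p.2 ∂η p.2 := by
      rw [lintegral_add_comp_fst_snd _ (u := fun z => edist z p.1)
        (measurable_id.edist measurable_const) (v := fun y => edist y p.2)
        (measurable_id.edist measurable_const), Kernel.parallelComp_apply]
      rw [show ((κ p.1).prod (η p.2)).map Prod.fst = κ p.1 from Measure.fst_prod,
        show ((κ p.1).prod (η p.2)).map Prod.snd = η p.2 from Measure.snd_prod]

theorem stmt8_general (d₁ d₂ : ℕ)
    (σ' σ : Measure (E d₁)) [IsProbabilityMeasure σ]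
    (ρ' ρ : Measure (E d₂)) [IsProbabilityMeasure ρ]
    (γbar : Measure (E d₁ × E d₁))
    (hγbar1 : γbar.map Prod.fst = σ')
    (γ : Measure (E d₂ × E d₂))
    (hγ1 : γ.map Prod.fst = ρ')
    (l : Measure (E d₁ × E d₂)) [IsProbabilityMeasure l]
    (hl1 : l.map Prod.fst = σ) (hl2 : l.map Prod.snd = ρ)
    (κZ : ProbabilityTheory.Kernel (E d₁) (E d₁)) [ProbabilityTheory.IsMarkovKernel κZ]
    (hκZ : (σ.compProd κZ).map Prod.swap = γbar)
    (κY : ProbabilityTheory.Kernel (E d₂) (E d₂)) [ProbabilityTheory.IsMarkovKernel κY]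
    (hκY : (ρ.compProd κY).map Prod.swap = γ) :
    (l.bind fun p => prodM (κZ p.1) (κY p.2)).map Prod.fst = σ' ∧
    (l.bind fun p => prodM (κZ p.1) (κY p.2)).map Prod.snd = ρ' ∧
    KL (l.bind fun p => prodM (κZ p.1) (κY p.2)) (prodM σ' ρ') ≤ KL l (prodM σ ρ) ∧
    OTC edistE2 (l.bind fun p => prodM (κZ p.1) (κY p.2)) l ≤
      ∫⁻ p, edist p.1 p.2 ∂γbar + ∫⁻ p, edist p.1 p.2 ∂γ := by
  have hσ' : σ' = κZ ∘ₘ σ := by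
    rw [← hγbar1, ← hκZ, ← Measure.snd_compProd]
    exact Measure.fst_map_swap
  have hρ' : ρ' = κY ∘ₘ ρ := by
    rw [← hγ1, ← hκY, ← Measure.snd_compProd]
    exact Measure.fst_map_swap
  rw [bind_prodM_eq_parallelComp_comp]
  refine ⟨?_, ?_, ?_, ?_⟩
  · rw [map_fst_parallelComp_comp, hl1, hσ']
  · rw [map_snd_parallelComp_comp, hl2, hρ']
  · rw [hσ', hρ', prodM_eq_prod, prodM_eq_prod, ← parallelComp_comp_prod]
    exact KL_comp_right_le l (σ.prod ρ) (κZ ∥ₖ κY)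
  · calc OTC edistE2 ((κZ ∥ₖ κY) ∘ₘ l) l
        ≤ ∫⁻ p, ∫⁻ w, edistE2 w p ∂(κZ ∥ₖ κY) p ∂l := OTC_comp_le l _ measurable_edistE2
      _ ≤ ∫⁻ p, (∫⁻ z, edist z p.1 ∂κZ p.1 + ∫⁻ y, edist y p.2 ∂κY p.2) ∂l :=
          lintegral_mono (lintegral_edistE2_parallelComp_le κZ κY)
      _ = ∫⁻ z', ∫⁻ z, edist z z' ∂κZ z' ∂σ + ∫⁻ y', ∫⁻ y, edist y y' ∂κY y' ∂ρ := by
          have hdisp {d : ℕ} (κ : Kernel (E d) (E d)) [IsSFiniteKernel κ] :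
              Measurable fun x => ∫⁻ y, edist y x ∂κ x :=
            (measurable_edist.comp measurable_swap).lintegral_kernel_prod_right'
          rw [lintegral_add_comp_fst_snd l (hdisp κZ) (hdisp κY), hl1, hl2]
      _ = ∫⁻ p, edist p.1 p.2 ∂γbar + ∫⁻ p, edist p.1 p.2 ∂γ := by
          rw [← hκZ, ← hκY, lintegral_map_swap_compProd σ κZ measurable_edist,
            lintegral_map_swap_compProd ρ κY measurable_edist]

/-- the gluing construction of the Γ-limsup recovery sequence.
Given `γ̄ ∈ Π(σ', σ)`, `γ ∈ Π(ρ', ρ)`, `λ ∈ Π(σ, ρ)` and Markov kernels `κZ, κY`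
disintegrating `γ̄`, `γ` over their second marginals, the glued measure
`λ' = λ.bind (fun (z',y') => κZ z' ⊗ κY y')` satisfies: (a) `λ' ∈ Π(σ', ρ')`;
(b) `KL(λ'|σ'⊗ρ') ≤ KL(λ|σ⊗ρ)`; (c) `W_{Z×Y}(λ', λ) ≤ ∫‖z−z'‖dγ̄ + ∫‖y−y'‖dγ`
(Euclidean distance on `Z×Y`). -/
theorem stmt8 (d₁ d₂ : ℕ) (Z : Set (E d₁)) (Y : Set (E d₂))
    (hZ : IsCompact Z) (hY : IsCompact Y)
    (σ' σ : Measure (E d₁)) [IsProbabilityMeasure σ'] [IsProbabilityMeasure σ]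
    (hσ'Z : σ' Zᶜ = 0) (hσZ : σ Zᶜ = 0)
    (ρ' ρ : Measure (E d₂)) [IsProbabilityMeasure ρ'] [IsProbabilityMeasure ρ]
    (hρ'Y : ρ' Yᶜ = 0) (hρY : ρ Yᶜ = 0)
    (γbar : Measure (E d₁ × E d₁)) [IsProbabilityMeasure γbar]
    (hγbar1 : γbar.map Prod.fst = σ') (hγbar2 : γbar.map Prod.snd = σ)
    (γ : Measure (E d₂ × E d₂)) [IsProbabilityMeasure γ]
    (hγ1 : γ.map Prod.fst = ρ') (hγ2 : γ.map Prod.snd = ρ)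
    (l : Measure (E d₁ × E d₂)) [IsProbabilityMeasure l]
    (hl1 : l.map Prod.fst = σ) (hl2 : l.map Prod.snd = ρ)
    (κZ : ProbabilityTheory.Kernel (E d₁) (E d₁)) [ProbabilityTheory.IsMarkovKernel κZ]
    (hκZ : (σ.compProd κZ).map Prod.swap = γbar)
    (κY : ProbabilityTheory.Kernel (E d₂) (E d₂)) [ProbabilityTheory.IsMarkovKernel κY]
    (hκY : (ρ.compProd κY).map Prod.swap = γ) :
    (l.bind fun p => prodM (κZ p.1) (κY p.2)).map Prod.fst = σ' ∧
    (l.bind fun p => prodM (κZ p.1) (κY p.2)).map Prod.snd = ρ' ∧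
    KL (l.bind fun p => prodM (κZ p.1) (κY p.2)) (prodM σ' ρ') ≤ KL l (prodM σ ρ) ∧
    OTC edistE2 (l.bind fun p => prodM (κZ p.1) (κY p.2)) l ≤
      ∫⁻ p, edist p.1 p.2 ∂γbar + ∫⁻ p, edist p.1 p.2 ∂γ :=
  stmt8_general d₁ d₂ σ' σ ρ' ρ γbar hγbar1 γ hγ1 l hl1 hl2 κZ hκZ κY hκY
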